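/- arXiv:2512.05608 — 2 statements merged into one kernel-verified Lean document; each statement's English description precedes it below -/
import Mathlib

section
/- For all real z, the function S₂(z) - (1/2) S₁(z) is nonnegative, where S₁(z) = z/(e^z - 1) and S₂(z) = z(e^z + 1)/(e^z - 1), with the singularities at 0 filled by S₁(0) = 1 and S₂(0) = 2. -/
noncomputable def S1 (z : ℝ) : ℝ := if z = 0 then 1 else z / (Real.exp z - 1)

noncomputable def S2 (z : ℝ) : ℝ := if z = 0 then 2 else z * (Real.exp z + 1) / (Real.exp z - 1)

theorem S2_sub_half_S1_nonneg : ∀ z : ℝ, 0 ≤ S2 z - (1 / 2) * S1 z := by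
  intro z
  by_cases hz : z = 0
  · simp [S1, S2, hz]; norm_num
  · simp only [S1, S2, if_neg hz]
    rw [show z * (Real.exp z + 1) / (Real.exp z - 1) - 1 / 2 * (z / (Real.exp z - 1))
        = z * (Real.exp z + 1 / 2) / (Real.exp z - 1) by ring]
    rcases lt_or_gt_of_ne hz with h | h
    · have h1 : Real.exp z - 1 < 0 := by
        simpa using Real.exp_lt_one_iff.mpr h
      have h2 : z * (Real.exp z + 1 / 2) < 0 :=
        mul_neg_of_neg_of_pos h (by positivity)
      exact le_of_lt (div_pos_of_neg_of_neg h2 h1)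
    · have h1 : 0 < Real.exp z - 1 := by nlinarith [Real.add_one_le_exp z]
      have h2 : 0 < z * (Real.exp z + 1 / 2) := by positivity
      exact le_of_lt (div_pos h2 h1)
end

section
/- For F(u) = (1/4)(u² - 1)², f(u) = F'(u) = u³ - u, and any real numbers u, v with |u| ≤ M and |v| ≤ M, the inequality F(v) - F(u) ≤ f(u)(v - u) + β (v - u)² holds with β = (3M² - 1)/2. -/
noncomputable def F (u : ℝ) : ℝ := (1 / 4) * (u ^ 2 - 1) ^ 2

noncomputable def f (u : ℝ) : ℝ := u ^ 3 - u

theorem taylor_stabilization (M u v : ℝ) (hu : |u| ≤ M) (hv : |v| ≤ M) :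
    F v - F u ≤ f u * (v - u) + ((3 * M ^ 2 - 1) / 2) * (v - u) ^ 2 := by
  have h1 : u ^ 2 ≤ M ^ 2 := sq_le_sq' (neg_le_of_abs_le hu) (le_of_abs_le hu)
  have h2 : v ^ 2 ≤ M ^ 2 := sq_le_sq' (neg_le_of_abs_le hv) (le_of_abs_le hv)
  simp only [F, f]
  nlinarith [sq_nonneg (v - u), sq_nonneg (v + u), sq_nonneg (u*v - 1), sq_nonneg (v*(v-u)), sq_nonneg (u*(v-u)), mul_nonneg (sq_nonneg (v-u)) (sub_nonneg.2 h1), mul_nonneg (sq_nonneg (v-u)) (sub_nonneg.2 h2)]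
end
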